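/- Let G and H be graphs and let f, g : G → H be graph homomorphisms. Then f and g are ×-homotopic if and only if f and g belong to the same connected component of the poset Hom(G,H). -/

import Mathlib

structure XGraph where
  V : Type
  E : V → V → Prop
  symm : ∀ {x y}, E x y → E y x

def IsGraphHom (G H : XGraph) (f : G.V → H.V) : Prop :=
  ∀ {x y}, G.E x y → H.E (f x) (f y)

structure Walk (G : XGraph) (a b : G.V) where
  len : ℕ
  toFun : ℕ → G.V
  start_eq : toFun 0 = a
  end_eq : toFun len = b
  adj : ∀ i, i < len → G.E (toFun i) (toFun (i + 1))

structure MultiHom (G H : XGraph) where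
  toFun : G.V → Set H.V
  nonempty : ∀ x, (toFun x).Nonempty
  edge : ∀ {x y}, G.E x y → ∀ a ∈ toFun x, ∀ b ∈ toFun y, H.E a b

def MultiHom.le {G H : XGraph} (η η' : MultiHom G H) : Prop :=
  ∀ x, η.toFun x ⊆ η'.toFun x

def SameComponent {G H : XGraph} (η η' : MultiHom G H) : Prop :=
  Relation.ReflTransGen (fun a b => MultiHom.le a b ∨ MultiHom.le b a) η η'

def ofHom {G H : XGraph} (f : G.V → H.V) (hf : IsGraphHom G H f) : MultiHom G H where
  toFun x := {f x}
  nonempty x := ⟨f x, rfl⟩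
  edge := by
    intro x y hxy a ha b hb
    rw [Set.mem_singleton_iff] at ha hb
    subst ha; subst hb
    exact hf hxy

def prodI (G : XGraph) (n : ℕ) : XGraph where
  V := G.V × Fin (n + 1)
  E := fun p q => G.E p.1 q.1 ∧ p.2.val ≤ q.2.val + 1 ∧ q.2.val ≤ p.2.val + 1
  symm := by
    rintro p q ⟨h1, h2, h3⟩
    exact ⟨G.symm h1, h3, h2⟩

def MoveA {G : XGraph} {a b : G.V} (γ δ : Walk G a b) : Prop :=
  δ.len = γ.len + 2 ∧ ∃ k ≤ γ.len,
    (∀ i ≤ k, δ.toFun i = γ.toFun i) ∧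
    (∀ i, k ≤ i → i ≤ γ.len → δ.toFun (i + 2) = γ.toFun i)

def MoveB {G : XGraph} {a b : G.V} (γ δ : Walk G a b) : Prop :=
  γ.len = δ.len ∧ ∃ j, ∀ i ≤ γ.len, i ≠ j → γ.toFun i = δ.toFun i

def Eqv1 {G : XGraph} {a b : G.V} : Walk G a b → Walk G a b → Prop :=
  Relation.EqvGen MoveA

def Eqv2 {G : XGraph} {a b : G.V} : Walk G a b → Walk G a b → Prop :=
  Relation.EqvGen (fun γ δ => MoveA γ δ ∨ MoveB γ δ)

noncomputable def XGraph.dist (G : XGraph) (a b : G.V) : ℕ :=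
  sInf {n | ∃ γ : Walk G a b, γ.len = n}

def XGraph.Connected (G : XGraph) : Prop := ∀ a b : G.V, Nonempty (Walk G a b)

def XGraph.Bipartite (G : XGraph) : Prop :=
  ∃ c : G.V → ZMod 2, ∀ {x y}, G.E x y → c x ≠ c y

def constWalk {G : XGraph} (a : G.V) : Walk G a a :=
  ⟨0, fun _ => a, rfl, rfl, fun i hi => absurd hi (by omega)⟩

def Walk.concat {G : XGraph} {a b c : G.V} (γ : Walk G a b) (δ : Walk G b c) :
    Walk G a c where
  len := γ.len + δ.len
  toFun i := if i ≤ γ.len then γ.toFun i else δ.toFun (i - γ.len)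
  start_eq := by simp [γ.start_eq]
  end_eq := by
    by_cases h : δ.len = 0
    · have hbc : b = c := by
        have h1 := δ.end_eq
        rw [h, δ.start_eq] at h1
        exact h1
      simp [h, γ.end_eq, hbc]
    · have h1 : ¬ (γ.len + δ.len ≤ γ.len) := by omega
      try dsimp only
      rw [if_neg h1]
      have h2 : γ.len + δ.len - γ.len = δ.len := by omega
      rw [h2, δ.end_eq]
  adj := by
    intro i hi
    try dsimp only
    rcases lt_trichotomy i γ.len with h | h | h
    · rw [if_pos (by omega : i ≤ γ.len), if_pos (by omega : i + 1 ≤ γ.len)]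
      exact γ.adj i h
    · have hδ : 0 < δ.len := by omega
      rw [if_pos (by omega : i ≤ γ.len), if_neg (by omega : ¬ i + 1 ≤ γ.len)]
      have h2 : i + 1 - γ.len = 1 := by omega
      rw [h2, h, γ.end_eq]
      have h3 := δ.adj 0 hδ
      rw [δ.start_eq] at h3
      exact h3
    · rw [if_neg (by omega : ¬ i ≤ γ.len), if_neg (by omega : ¬ i + 1 ≤ γ.len)]
      have h2 : i + 1 - γ.len = (i - γ.len) + 1 := by omega
      rw [h2]
      exact δ.adj (i - γ.len) (by omega)

def Walk.reverse {G : XGraph} {a b : G.V} (γ : Walk G a b) : Walk G b a where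
  len := γ.len
  toFun i := γ.toFun (γ.len - i)
  start_eq := by simp [γ.end_eq]
  end_eq := by simp [γ.start_eq]
  adj := by
    intro i hi
    have h1 : γ.len - i = (γ.len - (i + 1)) + 1 := by omega
    have h2 := γ.adj (γ.len - (i + 1)) (by omega)
    rw [← h1] at h2
    exact G.symm h2

def Walk.map {G H : XGraph} (f : G.V → H.V) (hf : IsGraphHom G H f) {a b : G.V}
    (γ : Walk G a b) : Walk H (f a) (f b) where
  len := γ.len
  toFun i := f (γ.toFun i)
  start_eq := by (try dsimp only); rw [γ.start_eq]
  end_eq := by (try dsimp only); rw [γ.end_eq]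
  adj := fun i hi => hf (γ.adj i hi)

def Walk.pow {G : XGraph} {a : G.V} (γ : Walk G a a) : ℕ → Walk G a a
  | 0 => constWalk a
  | n + 1 => (Walk.pow γ n).concat γ

def Walk.zpow {G : XGraph} {a : G.V} (γ : Walk G a a) : ℤ → Walk G a a
  | Int.ofNat n => γ.pow n
  | Int.negSucc n => γ.reverse.pow (n + 1)
def finClip (n t : ℕ) : Fin (n + 1) := ⟨min t n, by omega⟩

def realizedWalk {G H : XGraph} {n : ℕ} (h : (prodI G n).V → H.V)
    (hh : IsGraphHom (prodI G n) H h) {v v' : G.V} (hvv' : G.E v v')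
    {w : H.V} (h0 : h (v, finClip n 0) = w) (hN : h (v, finClip n n) = w) :
    Walk H w w where
  len := 2 * n
  toFun i := if i % 2 = 0 then h (v, finClip n (i / 2)) else h (v', finClip n (i / 2))
  start_eq := by
    try dsimp only
    rw [if_pos (by norm_num : (0:ℕ) % 2 = 0), Nat.zero_div]
    exact h0
  end_eq := by
    try dsimp only
    rw [if_pos (by omega : (2 * n) % 2 = 0)]
    have h2 : 2 * n / 2 = n := by omega
    rw [h2]
    exact hN
  adj := by
    intro i hi
    try dsimp only
    rcases Nat.even_or_odd i with he | ho
    · obtain ⟨t, ht⟩ := he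
      rw [if_pos (by omega : i % 2 = 0), if_neg (by omega : ¬ (i + 1) % 2 = 0)]
      have h4 : (i + 1) / 2 = i / 2 := by omega
      rw [h4]
      refine hh ⟨hvv', ?_, ?_⟩ <;> (dsimp only; omega)
    · obtain ⟨t, ht⟩ := ho
      rw [if_neg (by omega : ¬ i % 2 = 0), if_pos (by omega : (i + 1) % 2 = 0)]
      refine hh ⟨G.symm hvv', ?_, ?_⟩ <;> (dsimp only [finClip]; omega)

def Realizable {G H : XGraph} (f : G.V → H.V) (v : G.V) (ω : Walk H (f v) (f v)) : Prop :=
  ∃ (n : ℕ) (h : (prodI G n).V → H.V) (hh : IsGraphHom (prodI G n) H h)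
    (hs : ∀ x, h (x, finClip n 0) = f x) (he : ∀ x, h (x, finClip n n) = f x)
    (v' : G.V) (_ : G.E v v'),
    Eqv2 ω (realizedWalk h hh ‹G.E v v'› (hs v) (he v))
def SquareFree (G : XGraph) : Prop :=
  (∀ x, ¬ G.E x x) ∧
  ¬ ∃ a b c d : G.V, a ≠ b ∧ a ≠ c ∧ a ≠ d ∧ b ≠ c ∧ b ≠ d ∧ c ≠ d ∧
    G.E a b ∧ G.E b c ∧ G.E c d ∧ G.E d a

def nbhd (G : XGraph) (v : G.V) : Set G.V := {y | G.E v y}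

def nbhd2 (G : XGraph) (v : G.V) : Set G.V := {z | ∃ y, G.E v y ∧ G.E y z}

def IsGraphCovering (G H : XGraph) (p : G.V → H.V) : Prop :=
  IsGraphHom G H p ∧ ∀ v : G.V, Set.BijOn p (nbhd G v) (nbhd H (p v))

def Is2CoveringMap (G H : XGraph) (p : G.V → H.V) : Prop :=
  IsGraphHom G H p ∧ ∀ v : G.V,
    Set.BijOn p (nbhd G v) (nbhd H (p v)) ∧ Set.BijOn p (nbhd2 G v) (nbhd2 H (p v))

def pushforward {G H1 H2 : XGraph} (p : H1.V → H2.V) (hp : IsGraphHom H1 H2 p)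
    (η : MultiHom G H1) : MultiHom G H2 where
  toFun x := p '' η.toFun x
  nonempty x := (η.nonempty x).image p
  edge := by
    rintro x y hxy a ⟨a', ha', rfl⟩ b ⟨b', hb', rfl⟩
    exact hp (η.edge hxy a' ha' b' hb')

def IsCycleWalk {G : XGraph} {a : G.V} (γ : Walk G a a) : Prop :=
  3 ≤ γ.len ∧ ∀ i j, i < γ.len → j < γ.len → γ.toFun i = γ.toFun j → i = j

def IsTree (T : XGraph) : Prop :=
  (∀ x, ¬ T.E x x) ∧ (∀ a b : T.V, Nonempty (Walk T a b)) ∧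
    ∀ (a : T.V) (γ : Walk T a a), ¬ IsCycleWalk γ

def IsPath {G : XGraph} {a b : G.V} (γ : Walk G a b) : Prop :=
  ∀ i j, i ≤ γ.len → j ≤ γ.len → γ.toFun i = γ.toFun j → i = j

def OnWalk {G : XGraph} {a b : G.V} (γ : Walk G a b) (y : G.V) : Prop :=
  ∃ i ≤ γ.len, γ.toFun i = y

def CrossHomotopic (G H : XGraph) (f g : G.V → H.V) : Prop :=
  ∃ (n : ℕ) (h : (prodI G n).V → H.V), IsGraphHom (prodI G n) H h ∧
    (∀ x, h (x, finClip n 0) = f x) ∧ (∀ x, h (x, finClip n n) = g x)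

def quotGraph (G : XGraph) (Γ : Type) [Group Γ] [MulAction Γ G.V] : XGraph where
  V := Quotient (MulAction.orbitRel Γ G.V)
  E := fun α β => ∃ x y : G.V, Quotient.mk (MulAction.orbitRel Γ G.V) x = α ∧
        Quotient.mk (MulAction.orbitRel Γ G.V) y = β ∧ G.E x y
  symm := by
    rintro α β ⟨x, y, hx, hy, hxy⟩
    exact ⟨y, x, hy, hx, G.symm hxy⟩

/-!
A ×-homotopy of length `n` is a sequence of homomorphisms `h₀ = f, h₁, …, hₙ = g` in which
consecutive terms `hᵢ, hᵢ₊₁` are both selections of the multi-homomorphism `x ↦ {hᵢ x, hᵢ₊₁ x}`,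
which lies above both of them in `Hom(G,H)`. Conversely, choosing a selection of every
multi-homomorphism turns a chain of comparable elements into a chain of maps, and two selections of
a common multi-homomorphism are ×-homotopic in one step. Gluing homotopies end to end finishes the
argument.
-/

variable {G H : XGraph}

@[simp]
lemma finClip_val (n t : ℕ) : (finClip n t).val = min t n := rfl

lemma prodI_edge_finClip {n i j : ℕ} {x y : G.V} (hxy : G.E x y) (hij : i ≤ j + 1)
    (hji : j ≤ i + 1) : (prodI G n).E (x, finClip n i) (y, finClip n j) :=
  ⟨hxy, by simp only [finClip_val]; omega, by simp only [finClip_val]; omega⟩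

namespace CrossHomotopic

lemma of_forall_mem (θ : MultiHom G H) {f g : G.V → H.V} (hf : ∀ x, f x ∈ θ.toFun x)
    (hg : ∀ x, g x ∈ θ.toFun x) : CrossHomotopic G H f g := by
  refine ⟨1, fun p => if p.2.val = 0 then f p.1 else g p.1, ?_, fun _ => rfl, fun _ => rfl⟩
  have hmem : ∀ p : (prodI G 1).V, (if p.2.val = 0 then f p.1 else g p.1) ∈ θ.toFun p.1 := by
    intro p
    split_ifs
    exacts [hf p.1, hg p.1]
  exact fun {p q} hpq => θ.edge hpq.1 _ (hmem p) _ (hmem q)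

lemma trans {f g k : G.V → H.V} (h₁ : CrossHomotopic G H f g) (h₂ : CrossHomotopic G H g k) :
    CrossHomotopic G H f k := by
  obtain ⟨n, h, hh, hs, he⟩ := h₁
  obtain ⟨m, h', hh', hs', he'⟩ := h₂
  let c : (prodI G (n + m)).V → H.V := fun p =>
    if p.2.val ≤ n then h (p.1, finClip n p.2) else h' (p.1, finClip m (p.2 - n))
  have c_of_le : ∀ p : (prodI G (n + m)).V, p.2.val ≤ n → c p = h (p.1, finClip n p.2) :=
    fun p hp => if_pos hp
  have c_of_ge : ∀ p : (prodI G (n + m)).V, n ≤ p.2.val →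
      c p = h' (p.1, finClip m (p.2 - n)) := by
    intro p hp
    by_cases hpn : p.2.val ≤ n
    · have hpn' : p.2.val = n := le_antisymm hpn hp
      simp only [c, if_pos hpn, hpn', Nat.sub_self]
      exact (he p.1).trans (hs' p.1).symm
    · exact if_neg hpn
  refine ⟨n + m, c, ?_, fun x => ?_, fun x => ?_⟩
  · rintro p q ⟨hpq, hpq₁, hpq₂⟩
    by_cases hp : p.2.val ≤ n ∧ q.2.val ≤ n
    · rw [c_of_le p hp.1, c_of_le q hp.2]
      exact hh (prodI_edge_finClip hpq hpq₁ hpq₂)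
    · rw [c_of_ge p (by omega), c_of_ge q (by omega)]
      exact hh' (prodI_edge_finClip hpq (by omega) (by omega))
  · rw [c_of_le (x, finClip (n + m) 0) (by simp)]
    simpa using hs x
  · rw [c_of_ge (x, finClip (n + m) (n + m)) (by simp)]
    simpa using he' x

end CrossHomotopic

namespace MultiHom

noncomputable def sel (η : MultiHom G H) : G.V → H.V := fun x => (η.nonempty x).some

lemma sel_mem (η : MultiHom G H) (x : G.V) : η.sel x ∈ η.toFun x :=
  (η.nonempty x).some_mem

lemma sel_ofHom (f : G.V → H.V) (hf : IsGraphHom G H f) : (ofHom f hf).sel = f :=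
  funext fun x => (ofHom f hf).sel_mem x

lemma crossHomotopic_sel_of_comparable {η η' : MultiHom G H} (h : η.le η' ∨ η'.le η) :
    CrossHomotopic G H η.sel η'.sel := by
  rcases h with h | h
  · exact .of_forall_mem η' (fun x => h x (η.sel_mem x)) η'.sel_mem
  · exact .of_forall_mem η η.sel_mem (fun x => h x (η'.sel_mem x))

end MultiHom

lemma SameComponent.crossHomotopic_sel {η η' : MultiHom G H} (h : SameComponent η η') :
    CrossHomotopic G H η.sel η'.sel := by
  induction h with
  | refl => exact .of_forall_mem η η.sel_mem η.sel_mem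
  | tail _ hcomp ih => exact ih.trans (MultiHom.crossHomotopic_sel_of_comparable hcomp)

lemma SameComponent.of_le_of_le {η η' θ : MultiHom G H} (h : η.le θ) (h' : η'.le θ) :
    SameComponent η η' :=
  .tail (.single (.inl h)) (.inr h')

section Slices

variable {n : ℕ} {h : (prodI G n).V → H.V}

def slice (h : (prodI G n).V → H.V) (i : ℕ) : G.V → H.V := fun x => h (x, finClip n i)

lemma isGraphHom_slice (hh : IsGraphHom (prodI G n) H h) (i : ℕ) :
    IsGraphHom G H (slice h i) :=
  fun hxy => hh (prodI_edge_finClip hxy (by omega) (by omega))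

def sliceSpan (hh : IsGraphHom (prodI G n) H h) (i : ℕ) : MultiHom G H where
  toFun x := {slice h i x, slice h (i + 1) x}
  nonempty x := ⟨_, Set.mem_insert _ _⟩
  edge := by
    rintro x y hxy a (rfl | rfl) b (rfl | rfl) <;>
      exact hh (prodI_edge_finClip hxy (by omega) (by omega))

lemma sameComponent_slice_succ (hh : IsGraphHom (prodI G n) H h) (i : ℕ) :
    SameComponent (ofHom _ (isGraphHom_slice hh i)) (ofHom _ (isGraphHom_slice hh (i + 1))) :=
  .of_le_of_le (θ := sliceSpan hh i)
    (fun _ => Set.singleton_subset_iff.mpr (Set.mem_insert _ _))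
    (fun _ => Set.singleton_subset_iff.mpr (Set.mem_insert_of_mem _ rfl))

lemma sameComponent_slice_zero (hh : IsGraphHom (prodI G n) H h) (i : ℕ) :
    SameComponent (ofHom _ (isGraphHom_slice hh 0)) (ofHom _ (isGraphHom_slice hh i)) := by
  induction i with
  | zero => exact .refl
  | succ i ih => exact ih.trans (sameComponent_slice_succ hh i)

end Slices

lemma CrossHomotopic.sameComponent {f g : G.V → H.V} (hf : IsGraphHom G H f)
    (hg : IsGraphHom G H g) (hfg : CrossHomotopic G H f g) :
    SameComponent (ofHom f hf) (ofHom g hg) := by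
  obtain ⟨n, h, hh, hs, he⟩ := hfg
  obtain rfl : slice h 0 = f := funext hs
  obtain rfl : slice h n = g := funext he
  exact sameComponent_slice_zero hh n

theorem statement_1 (G H : XGraph) (f g : G.V → H.V)
    (hf : IsGraphHom G H f) (hg : IsGraphHom G H g) :
    CrossHomotopic G H f g ↔ SameComponent (ofHom f hf) (ofHom g hg) := by
  refine ⟨CrossHomotopic.sameComponent hf hg, fun h => ?_⟩
  simpa only [MultiHom.sel_ofHom] using h.crossHomotopic_sel
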